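/- In the Artin braid group B_4, the product of the local braid monodromy contributions of two conics meeting at four nodes (four node braids and two branch-point braids) satisfies σ_2² · (σ_3 σ_2² σ_3^{−1}) · (σ_2^{−1} σ_1² σ_2) · (σ_3 σ_2^{−1} σ_1² σ_2 σ_3^{−1}) · σ_3 · σ_1 = σ_2 σ_3² σ_1² σ_2 σ_3 σ_1 σ_2². -/

import Mathlib

/-- The braid relations among `m` Artin generators `σ_1, …, σ_m`, where the
generator `σ_{k+1}` is represented by the index `k : Fin m`:
`σ_i σ_{i+1} σ_i = σ_{i+1} σ_i σ_{i+1}` and `σ_i σ_j = σ_j σ_i` for `|i - j| ≥ 2`. -/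
def braidRels (m : ℕ) : Set (FreeGroup (Fin m)) :=
  { r | (∃ i j : Fin m, (i : ℕ) + 1 = (j : ℕ) ∧
          r = FreeGroup.of i * FreeGroup.of j * FreeGroup.of i *
              (FreeGroup.of j * FreeGroup.of i * FreeGroup.of j)⁻¹) ∨
        (∃ i j : Fin m, (i : ℕ) + 2 ≤ (j : ℕ) ∧
          r = FreeGroup.of i * FreeGroup.of j * (FreeGroup.of i)⁻¹ * (FreeGroup.of j)⁻¹) }

/-- The Artin braid group `B_n` on `n` strands, presented by the generators
`σ_1, …, σ_{n-1}` subject to the braid relations. -/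
def BraidGroup (n : ℕ) : Type := PresentedGroup (braidRels (n - 1))

instance (n : ℕ) : Group (BraidGroup n) :=
  inferInstanceAs (Group (PresentedGroup (braidRels (n - 1))))

/-- The Artin generator `σ_k` of the braid group `B_n`, defined for `1 ≤ k ≤ n - 1`
(with junk value `1` for indices out of range). -/
def σ (n : ℕ) (k : ℕ) : BraidGroup n :=
  if h : 1 ≤ k ∧ k ≤ n - 1 then
    (PresentedGroup.of (⟨k - 1, by omega⟩ : Fin (n - 1)) : PresentedGroup (braidRels (n - 1)))
  else 1

/-!
Write `a, b, c` for `σ₁, σ₂, σ₃`. The relations `aba = bab` and `bcb = cbc` say that `ba`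
conjugates `b` to `a` and `bc` conjugates `b` to `c`, hence `b^n` to `a^n` and `c^n`. This turns
`c b² c⁻¹` into `b⁻¹ c² b` and `a² b a` into `b a b²`, after which both sides agree in the free
group.
-/

theorem σ_eq_of {n k : ℕ} (hk : 1 ≤ k) (hkn : k ≤ n - 1) :
    σ n k = (PresentedGroup.of (⟨k - 1, by omega⟩ : Fin (n - 1)) :
      PresentedGroup (braidRels (n - 1))) :=
  dif_pos ⟨hk, hkn⟩

theorem σ_mul_σ_succ_mul_σ {n k : ℕ} (hk : 1 ≤ k) (hkn : k + 1 ≤ n - 1) :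
    σ n k * σ n (k + 1) * σ n k = σ n (k + 1) * σ n k * σ n (k + 1) := by
  rw [σ_eq_of hk (by omega), σ_eq_of (by omega) hkn]
  exact PresentedGroup.mk_eq_mk_of_mul_inv_mem (Or.inl ⟨_, _, by dsimp only; omega, rfl⟩)

theorem semiconjBy_mul_of_braid {G : Type*} [Group G] {x y : G} (h : x * y * x = y * x * y) :
    SemiconjBy (x * y) x y := by
  rw [SemiconjBy, h, mul_assoc]

theorem two_conics_monodromy_of_braid {G : Type*} [Group G] {a b c : G}
    (hab : a * b * a = b * a * b) (hbc : b * c * b = c * b * c) :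
    b ^ 2 * (c * b ^ 2 * c⁻¹) * (b⁻¹ * a ^ 2 * b) *
        (c * b⁻¹ * a ^ 2 * b * c⁻¹) * c * a =
      b * c ^ 2 * a ^ 2 * b * c * a * b ^ 2 := by
  have hba_sq : (b * a) * b ^ 2 = a ^ 2 * (b * a) :=
    (semiconjBy_mul_of_braid hab.symm).pow_right 2
  have hbc_sq : (b * c) * b ^ 2 = c ^ 2 * (b * c) :=
    (semiconjBy_mul_of_braid hbc).pow_right 2
  calc _ = b * ((b * c) * b ^ 2) * c⁻¹ * b⁻¹ * a ^ 2 * b * c * b⁻¹ * (a ^ 2 * (b * a)) := by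
          simp only [pow_two, mul_assoc, inv_mul_cancel_left]
    _ = b * (c ^ 2 * (b * c)) * c⁻¹ * b⁻¹ * a ^ 2 * b * c * b⁻¹ * ((b * a) * b ^ 2) := by
          rw [hbc_sq, hba_sq]
    _ = _ := by group

/-- In `B_4`, the product of the local contributions of two conics meeting at four nodes
satisfies
`σ₂² (σ₃ σ₂² σ₃⁻¹)(σ₂⁻¹ σ₁² σ₂)(σ₃ σ₂⁻¹ σ₁² σ₂ σ₃⁻¹) σ₃ σ₁ = σ₂ σ₃² σ₁² σ₂ σ₃ σ₁ σ₂²`. -/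
theorem two_conics_four_nodes_braid :
    σ 4 2 ^ 2 * (σ 4 3 * σ 4 2 ^ 2 * (σ 4 3)⁻¹) * ((σ 4 2)⁻¹ * σ 4 1 ^ 2 * σ 4 2) *
        (σ 4 3 * (σ 4 2)⁻¹ * σ 4 1 ^ 2 * σ 4 2 * (σ 4 3)⁻¹) * σ 4 3 * σ 4 1 =
      σ 4 2 * σ 4 3 ^ 2 * σ 4 1 ^ 2 * σ 4 2 * σ 4 3 * σ 4 1 * σ 4 2 ^ 2 :=
  two_conics_monodromy_of_braid (σ_mul_σ_succ_mul_σ (n := 4) (k := 1) le_rfl (by norm_num))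
    (σ_mul_σ_succ_mul_σ (n := 4) (k := 2) (by norm_num) (by norm_num))
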